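/- For the weight w(x) = log(2/(1−x)) on [−1,1), the first recurrence coefficients of the associated orthonormal polynomials are a₀ = 1/2, a₁ = 1/14, and b₀² = 7/36, b₁² = 2588/11025. -/

import Mathlib

open MeasureTheory Polynomial

noncomputable section

lemma logInt : IntervalIntegrable Real.log MeasureTheory.volume 0 2 := by
  rw [intervalIntegrable_iff_integrableOn_Ioo_of_le (by norm_num)]
  have hg : MeasureTheory.IntegrableOn (fun u : ℝ => 2 * u ^ (-(1:ℝ)/2) + 1)
      (Set.Ioo 0 2) := by
    apply MeasureTheory.Integrable.add
    · have h := intervalIntegral.intervalIntegrable_rpow' (a := 0) (b := 2)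
        (r := -(1:ℝ)/2) (by norm_num)
      rw [intervalIntegrable_iff_integrableOn_Ioo_of_le (by norm_num)] at h
      exact h.const_mul 2
    · exact MeasureTheory.integrableOn_const measure_Ioo_lt_top.ne
  apply MeasureTheory.Integrable.mono' hg Real.measurable_log.aestronglyMeasurable
  filter_upwards [MeasureTheory.ae_restrict_mem measurableSet_Ioo] with u hu
  have hx : (0:ℝ) < u ^ (-(1:ℝ)/2) := Real.rpow_pos_of_pos hu.1 _
  rcases le_or_gt u 1 with h | h
  · rw [Real.norm_eq_abs, abs_of_nonpos (Real.log_nonpos hu.1.le h)]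
    have h3 := Real.log_le_sub_one_of_pos hx
    rw [Real.log_rpow hu.1] at h3
    linarith
  · rw [Real.norm_eq_abs, abs_of_nonneg (Real.log_nonneg h.le)]
    have h3 := Real.log_le_sub_one_of_pos hu.1
    linarith [hu.2]

lemma my_ftc (f F : ℝ → ℝ) (hF : ContinuousOn F (Set.Icc 0 2))
    (hd : ∀ u ∈ Set.Ioo (0:ℝ) 2, HasDerivAt F (f u) u)
    (hi : IntervalIntegrable f MeasureTheory.volume 0 2) :
    ∫ u in (0:ℝ)..2, f u = F 2 - F 0 :=
  intervalIntegral.integral_eq_sub_of_hasDeriv_right_of_le (by norm_num) hF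
    (fun u hu => (hd u hu).hasDerivWithinAt) hi

lemma hasDerivAt_poly5 (a0 a1 a2 a3 a4 a5 u : ℝ) :
    HasDerivAt (fun x : ℝ => a0 + a1*x + a2*x^2 + a3*x^3 + a4*x^4 + a5*x^5)
      (a1 + 2*a2*u + 3*a3*u^2 + 4*a4*u^3 + 5*a5*u^4) u := by
  have h := (((((hasDerivAt_const u a0).add ((hasDerivAt_pow 1 u).const_mul a1)).add
    ((hasDerivAt_pow 2 u).const_mul a2)).add ((hasDerivAt_pow 3 u).const_mul a3)).add
    ((hasDerivAt_pow 4 u).const_mul a4)).add ((hasDerivAt_pow 5 u).const_mul a5)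
  have e : (fun x : ℝ => a0 + a1*x + a2*x^2 + a3*x^3 + a4*x^4 + a5*x^5)
      = fun x : ℝ => a0 + a1*x^1 + a2*x^2 + a3*x^3 + a4*x^4 + a5*x^5 := by
    funext x; ring
  rw [e]
  refine h.congr_deriv ?_
  push_cast
  ring

lemma splitInt (k : ℕ) : IntervalIntegrable
    (fun u : ℝ => (1-u)^k * Real.log 2 - (1-u)^k * Real.log u)
    MeasureTheory.volume 0 2 :=
  (Continuous.intervalIntegrable (by continuity) _ _).sub
    (logInt.continuousOn_mul (Continuous.continuousOn (by continuity)))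

lemma I0 : ∫ u in (0:ℝ)..2, ((1-u)^0 * Real.log 2 - (1-u)^0 * Real.log u) = 2 := by
  have key := my_ftc (fun u => (1-u)^0 * Real.log 2 - (1-u)^0 * Real.log u)
    (fun u => ((0) + (1)*u + (0)*u^2 + (0)*u^3 + (0)*u^4 + (0)*u^5) * Real.log 2
      + ((u * Real.log u) * ((-1) + (0)*u + (0)*u^2 + (0)*u^3 + (0)*u^4 + (0)*u^5)
        + ((0) + (1)*u + (0)*u^2 + (0)*u^3 + (0)*u^4 + (0)*u^5)))
    (Continuous.continuousOn (by
      apply Continuous.add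
      · exact (by continuity : Continuous fun u : ℝ => ((0) + (1)*u + (0)*u^2 + (0)*u^3 + (0)*u^4 + (0)*u^5)).mul continuous_const
      · exact (Real.continuous_mul_log.mul (by continuity)).add (by continuity)))
    (fun u hu => by
      have h1 : HasDerivAt (fun y : ℝ => y * Real.log y) (Real.log u + 1) u :=
        Real.hasDerivAt_mul_log (ne_of_gt hu.1)
      have h := ((hasDerivAt_poly5 (0) (1) (0) (0) (0) (0) u).mul_const (Real.log 2)).add
        ((h1.mul (hasDerivAt_poly5 (-1) (0) (0) (0) (0) (0) u)).add
          (hasDerivAt_poly5 (0) (1) (0) (0) (0) (0) u))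
      refine h.congr_deriv ?_
      ring)
    (splitInt 0)
  rw [key]
  simp only [Real.log_zero]
  ring_nf

lemma I1 : ∫ u in (0:ℝ)..2, ((1-u)^1 * Real.log 2 - (1-u)^1 * Real.log u) = 1 := by
  have key := my_ftc (fun u => (1-u)^1 * Real.log 2 - (1-u)^1 * Real.log u)
    (fun u => ((0) + (1)*u + (-1/2)*u^2 + (0)*u^3 + (0)*u^4 + (0)*u^5) * Real.log 2
      + ((u * Real.log u) * ((-1) + (1/2)*u + (0)*u^2 + (0)*u^3 + (0)*u^4 + (0)*u^5)
        + ((0) + (1)*u + (-1/4)*u^2 + (0)*u^3 + (0)*u^4 + (0)*u^5)))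
    (Continuous.continuousOn (by
      apply Continuous.add
      · exact (by continuity : Continuous fun u : ℝ => ((0) + (1)*u + (-1/2)*u^2 + (0)*u^3 + (0)*u^4 + (0)*u^5)).mul continuous_const
      · exact (Real.continuous_mul_log.mul (by continuity)).add (by continuity)))
    (fun u hu => by
      have h1 : HasDerivAt (fun y : ℝ => y * Real.log y) (Real.log u + 1) u :=
        Real.hasDerivAt_mul_log (ne_of_gt hu.1)
      have h := ((hasDerivAt_poly5 (0) (1) (-1/2) (0) (0) (0) u).mul_const (Real.log 2)).add
        ((h1.mul (hasDerivAt_poly5 (-1) (1/2) (0) (0) (0) (0) u)).add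
          (hasDerivAt_poly5 (0) (1) (-1/4) (0) (0) (0) u))
      refine h.congr_deriv ?_
      ring)
    (splitInt 1)
  rw [key]
  simp only [Real.log_zero]
  ring_nf

lemma I2 : ∫ u in (0:ℝ)..2, ((1-u)^2 * Real.log 2 - (1-u)^2 * Real.log u) = 8/9 := by
  have key := my_ftc (fun u => (1-u)^2 * Real.log 2 - (1-u)^2 * Real.log u)
    (fun u => ((0) + (1)*u + (-1)*u^2 + (1/3)*u^3 + (0)*u^4 + (0)*u^5) * Real.log 2
      + ((u * Real.log u) * ((-1) + (1)*u + (-1/3)*u^2 + (0)*u^3 + (0)*u^4 + (0)*u^5)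
        + ((0) + (1)*u + (-1/2)*u^2 + (1/9)*u^3 + (0)*u^4 + (0)*u^5)))
    (Continuous.continuousOn (by
      apply Continuous.add
      · exact (by continuity : Continuous fun u : ℝ => ((0) + (1)*u + (-1)*u^2 + (1/3)*u^3 + (0)*u^4 + (0)*u^5)).mul continuous_const
      · exact (Real.continuous_mul_log.mul (by continuity)).add (by continuity)))
    (fun u hu => by
      have h1 : HasDerivAt (fun y : ℝ => y * Real.log y) (Real.log u + 1) u :=
        Real.hasDerivAt_mul_log (ne_of_gt hu.1)
      have h := ((hasDerivAt_poly5 (0) (1) (-1) (1/3) (0) (0) u).mul_const (Real.log 2)).add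
        ((h1.mul (hasDerivAt_poly5 (-1) (1) (-1/3) (0) (0) (0) u)).add
          (hasDerivAt_poly5 (0) (1) (-1/2) (1/9) (0) (0) u))
      refine h.congr_deriv ?_
      ring)
    (splitInt 2)
  rw [key]
  simp only [Real.log_zero]
  ring_nf

lemma I3 : ∫ u in (0:ℝ)..2, ((1-u)^3 * Real.log 2 - (1-u)^3 * Real.log u) = 2/3 := by
  have key := my_ftc (fun u => (1-u)^3 * Real.log 2 - (1-u)^3 * Real.log u)
    (fun u => ((0) + (1)*u + (-3/2)*u^2 + (1)*u^3 + (-1/4)*u^4 + (0)*u^5) * Real.log 2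
      + ((u * Real.log u) * ((-1) + (3/2)*u + (-1)*u^2 + (1/4)*u^3 + (0)*u^4 + (0)*u^5)
        + ((0) + (1)*u + (-3/4)*u^2 + (1/3)*u^3 + (-1/16)*u^4 + (0)*u^5)))
    (Continuous.continuousOn (by
      apply Continuous.add
      · exact (by continuity : Continuous fun u : ℝ => ((0) + (1)*u + (-3/2)*u^2 + (1)*u^3 + (-1/4)*u^4 + (0)*u^5)).mul continuous_const
      · exact (Real.continuous_mul_log.mul (by continuity)).add (by continuity)))
    (fun u hu => by
      have h1 : HasDerivAt (fun y : ℝ => y * Real.log y) (Real.log u + 1) u :=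
        Real.hasDerivAt_mul_log (ne_of_gt hu.1)
      have h := ((hasDerivAt_poly5 (0) (1) (-3/2) (1) (-1/4) (0) u).mul_const (Real.log 2)).add
        ((h1.mul (hasDerivAt_poly5 (-1) (3/2) (-1) (1/4) (0) (0) u)).add
          (hasDerivAt_poly5 (0) (1) (-3/4) (1/3) (-1/16) (0) u))
      refine h.congr_deriv ?_
      ring)
    (splitInt 3)
  rw [key]
  simp only [Real.log_zero]
  ring_nf

lemma I4 : ∫ u in (0:ℝ)..2, ((1-u)^4 * Real.log 2 - (1-u)^4 * Real.log u) = 46/75 := by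
  have key := my_ftc (fun u => (1-u)^4 * Real.log 2 - (1-u)^4 * Real.log u)
    (fun u => ((0) + (1)*u + (-2)*u^2 + (2)*u^3 + (-1)*u^4 + (1/5)*u^5) * Real.log 2
      + ((u * Real.log u) * ((-1) + (2)*u + (-2)*u^2 + (1)*u^3 + (-1/5)*u^4 + (0)*u^5)
        + ((0) + (1)*u + (-1)*u^2 + (2/3)*u^3 + (-1/4)*u^4 + (1/25)*u^5)))
    (Continuous.continuousOn (by
      apply Continuous.add
      · exact (by continuity : Continuous fun u : ℝ => ((0) + (1)*u + (-2)*u^2 + (2)*u^3 + (-1)*u^4 + (1/5)*u^5)).mul continuous_const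
      · exact (Real.continuous_mul_log.mul (by continuity)).add (by continuity)))
    (fun u hu => by
      have h1 : HasDerivAt (fun y : ℝ => y * Real.log y) (Real.log u + 1) u :=
        Real.hasDerivAt_mul_log (ne_of_gt hu.1)
      have h := ((hasDerivAt_poly5 (0) (1) (-2) (2) (-1) (1/5) u).mul_const (Real.log 2)).add
        ((h1.mul (hasDerivAt_poly5 (-1) (2) (-2) (1) (-1/5) (0) u)).add
          (hasDerivAt_poly5 (0) (1) (-1) (2/3) (-1/4) (1/25) u))
      refine h.congr_deriv ?_
      ring)
    (splitInt 4)
  rw [key]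
  simp only [Real.log_zero]
  ring_nf

lemma transfer (k : ℕ) :
    (∫ x in Set.Ioo (-1:ℝ) 1, x^k * Real.log (2/(1-x)))
      = ∫ u in (0:ℝ)..2, ((1-u)^k * Real.log 2 - (1-u)^k * Real.log u) := by
  have h1 : (∫ x in Set.Ioo (-1:ℝ) 1, x^k * Real.log (2/(1-x)))
      = ∫ x in (-1:ℝ)..1, x^k * Real.log (2/(1-x)) := by
    rw [intervalIntegral.integral_of_le (by norm_num : (-1:ℝ) ≤ 1),
      MeasureTheory.integral_Ioc_eq_integral_Ioo]
  have h2 := intervalIntegral.integral_comp_sub_left (a := (-1:ℝ)) (b := 1)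
    (fun u => (1-u)^k * Real.log (2/u)) 1
  simp only [sub_sub_cancel] at h2
  norm_num at h2
  rw [h1, h2]
  apply intervalIntegral.integral_congr_ae
  filter_upwards [] with u
  intro hu
  rw [Set.uIoc_of_le (by norm_num : (0:ℝ) ≤ 2)] at hu
  rw [Real.log_div two_ne_zero (ne_of_gt hu.1)]
  ring

lemma momInt (k : ℕ) :
    MeasureTheory.IntegrableOn (fun x : ℝ => x^k * Real.log (2/(1-x)))
      (Set.Ioo (-1:ℝ) 1) := by
  have h0 : IntervalIntegrable (fun u : ℝ => (1-u)^k * Real.log (2/u))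
      MeasureTheory.volume 0 2 := by
    have hs := splitInt k
    rw [intervalIntegrable_iff_integrableOn_Ioo_of_le (by norm_num)] at hs ⊢
    apply hs.congr_fun ?_ measurableSet_Ioo
    intro u hu
    simp only [Real.log_div two_ne_zero (ne_of_gt hu.1)]
    ring
  have h3 := (h0.comp_sub_left 1).symm
  norm_num at h3
  rw [intervalIntegrable_iff_integrableOn_Ioo_of_le (by norm_num : (-1:ℝ) ≤ 1)] at h3
  exact h3

lemma mom0 : (∫ x in Set.Ioo (-1:ℝ) 1, x^(0:ℕ) * Real.log (2/(1-x))) = 2 := (transfer 0).trans I0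
lemma mom1 : (∫ x in Set.Ioo (-1:ℝ) 1, x^(1:ℕ) * Real.log (2/(1-x))) = 1 := (transfer 1).trans I1
lemma mom2 : (∫ x in Set.Ioo (-1:ℝ) 1, x^(2:ℕ) * Real.log (2/(1-x))) = 8/9 := (transfer 2).trans I2
lemma mom3 : (∫ x in Set.Ioo (-1:ℝ) 1, x^(3:ℕ) * Real.log (2/(1-x))) = 2/3 := (transfer 3).trans I3
lemma mom4 : (∫ x in Set.Ioo (-1:ℝ) 1, x^(4:ℕ) * Real.log (2/(1-x))) = 46/75 := (transfer 4).trans I4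

lemma expand_integral (c₀ c₁ c₂ c₃ c₄ : ℝ) :
    (∫ x in Set.Ioo (-1:ℝ) 1,
        (c₀ + c₁*x + c₂*x^2 + c₃*x^3 + c₄*x^4) * Real.log (2/(1-x)))
      = c₀*2 + c₁*1 + c₂*(8/9) + c₃*(2/3) + c₄*(46/75) := by
  have h : (∫ x in Set.Ioo (-1:ℝ) 1,
        (c₀ + c₁*x + c₂*x^2 + c₃*x^3 + c₄*x^4) * Real.log (2/(1-x)))
      = ∫ x in Set.Ioo (-1:ℝ) 1,
          (c₀*(x^(0:ℕ) * Real.log (2/(1-x)))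
            + (c₁*(x^(1:ℕ) * Real.log (2/(1-x)))
              + (c₂*(x^(2:ℕ) * Real.log (2/(1-x)))
                + (c₃*(x^(3:ℕ) * Real.log (2/(1-x)))
                  + c₄*(x^(4:ℕ) * Real.log (2/(1-x))))))) :=
    MeasureTheory.integral_congr_ae (Filter.Eventually.of_forall fun x => by ring)
  have i4 : MeasureTheory.Integrable (fun x : ℝ => c₄*(x^(4:ℕ) * Real.log (2/(1-x))))
      (MeasureTheory.volume.restrict (Set.Ioo (-1:ℝ) 1)) := (momInt 4).const_mul c₄
  have i3 : MeasureTheory.Integrable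
      (fun x : ℝ => c₃*(x^(3:ℕ) * Real.log (2/(1-x))) + c₄*(x^(4:ℕ) * Real.log (2/(1-x))))
      (MeasureTheory.volume.restrict (Set.Ioo (-1:ℝ) 1)) := ((momInt 3).const_mul c₃).add i4
  have i2 : MeasureTheory.Integrable
      (fun x : ℝ => c₂*(x^(2:ℕ) * Real.log (2/(1-x))) + (c₃*(x^(3:ℕ) * Real.log (2/(1-x)))
        + c₄*(x^(4:ℕ) * Real.log (2/(1-x)))))
      (MeasureTheory.volume.restrict (Set.Ioo (-1:ℝ) 1)) := ((momInt 2).const_mul c₂).add i3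
  have i1 : MeasureTheory.Integrable
      (fun x : ℝ => c₁*(x^(1:ℕ) * Real.log (2/(1-x))) + (c₂*(x^(2:ℕ) * Real.log (2/(1-x)))
        + (c₃*(x^(3:ℕ) * Real.log (2/(1-x))) + c₄*(x^(4:ℕ) * Real.log (2/(1-x))))))
      (MeasureTheory.volume.restrict (Set.Ioo (-1:ℝ) 1)) := ((momInt 1).const_mul c₁).add i2
  rw [h, MeasureTheory.integral_add ((momInt 0).const_mul c₀) i1,
    MeasureTheory.integral_add ((momInt 1).const_mul c₁) i2,
    MeasureTheory.integral_add ((momInt 2).const_mul c₂) i3,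
    MeasureTheory.integral_add ((momInt 3).const_mul c₃) i4,
    MeasureTheory.integral_const_mul, MeasureTheory.integral_const_mul,
    MeasureTheory.integral_const_mul, MeasureTheory.integral_const_mul,
    MeasureTheory.integral_const_mul, mom0, mom1, mom2, mom3, mom4]
  ring

/-- for the weight `w(x) = log(2/(1-x))` on `[-1,1)`, the first recurrence
coefficients of the associated orthonormal polynomials are `a₀ = 1/2`, `a₁ = 1/14`,
`b₀² = 7/36` and `b₁² = 2588/11025`. -/
theorem log_weight_first_recurrence_coeffs (p : ℕ → Polynomial ℝ) (a b : ℕ → ℝ)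
    (hdeg : ∀ n, (p n).degree = (n : WithBot ℕ))
    (hortho : ∀ m n, (∫ x in Set.Ioo (-1 : ℝ) 1,
      (p m).eval x * (p n).eval x * Real.log (2 / (1 - x))) = if m = n then 1 else 0)
    (hb : ∀ n, 0 < b n)
    (hrec0 : ∀ x : ℝ, x * (p 0).eval x = b 0 * (p 1).eval x + a 0 * (p 0).eval x)
    (hrec : ∀ n, ∀ x : ℝ, x * (p (n + 1)).eval x =
      b (n + 1) * (p (n + 2)).eval x + a (n + 1) * (p (n + 1)).eval x + b n * (p n).eval x) :
    a 0 = 1 / 2 ∧ a 1 = 1 / 14 ∧ (b 0) ^ 2 = 7 / 36 ∧ (b 1) ^ 2 = 2588 / 11025 := by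
  have hn1 : (p 1).natDegree = 1 := Polynomial.natDegree_eq_of_degree_eq_some (hdeg 1)
  have hn2 : (p 2).natDegree = 2 := Polynomial.natDegree_eq_of_degree_eq_some (hdeg 2)
  set c0 := (p 0).coeff 0 with hc0def
  set d0 := (p 1).coeff 0 with hd0def
  set d1 := (p 1).coeff 1 with hd1def
  set e0 := (p 2).coeff 0 with he0def
  set e1 := (p 2).coeff 1 with he1def
  set e2 := (p 2).coeff 2 with he2def
  have ev0 : ∀ x : ℝ, (p 0).eval x = c0 := by
    intro x
    conv_lhs => rw [Polynomial.eq_C_of_degree_le_zero (p := p 0) (le_of_eq (by exact_mod_cast hdeg 0))]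
    rw [Polynomial.eval_C]
  have ev1 : ∀ x : ℝ, (p 1).eval x = d0 + d1 * x := by
    intro x
    rw [Polynomial.eval_eq_sum_range, hn1]
    simp [Finset.sum_range_succ]
    rfl
  have ev2 : ∀ x : ℝ, (p 2).eval x = e0 + e1 * x + e2 * x^2 := by
    intro x
    rw [Polynomial.eval_eq_sum_range, hn2]
    simp [Finset.sum_range_succ]
    rfl
  have hr0 : ∀ x : ℝ, x * c0 = b 0 * (d0 + d1 * x) + a 0 * c0 := by
    intro x; have := hrec0 x; rw [ev0, ev1] at this; exact this
  have hr1 : ∀ x : ℝ, x * (d0 + d1 * x)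
      = b 1 * (e0 + e1 * x + e2 * x^2) + a 1 * (d0 + d1 * x) + b 0 * c0 := by
    intro x; have := hrec 0 x; rw [ev0, ev1, ev2] at this; exact this
  have f1 : b 0 * d0 + a 0 * c0 = 0 := by linear_combination (-1 : ℝ) * hr0 0
  have R1 : c0 = b 0 * d1 := by linear_combination hr0 1 - hr0 0
  have q2 : b 1 * e2 = d1 := by
    linear_combination (-1/2 : ℝ) * hr1 1 - (1/2 : ℝ) * hr1 (-1) + hr1 0
  have q1 : b 1 * e1 = d0 - a 1 * d1 := by
    linear_combination (-1/2 : ℝ) * hr1 1 + (1/2 : ℝ) * hr1 (-1)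
  have q0' : b 1 * e0 = -(a 1 * d0) - b 0 * c0 := by
    linear_combination (-1 : ℝ) * hr1 0
  -- orthogonality expansions
  have ortho_eq : ∀ (m n : ℕ) (c₀ c₁ c₂ c₃ c₄ : ℝ),
      (∀ x : ℝ, (p m).eval x * (p n).eval x = c₀ + c₁*x + c₂*x^2 + c₃*x^3 + c₄*x^4) →
      c₀*2 + c₁*1 + c₂*(8/9) + c₃*(2/3) + c₄*(46/75) = if m = n then 1 else 0 := by
    intro m n c₀ c₁ c₂ c₃ c₄ hg
    rw [← expand_integral c₀ c₁ c₂ c₃ c₄, ← hortho m n]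
    exact MeasureTheory.integral_congr_ae (Filter.Eventually.of_forall fun x => by simp only [hg x])
  have X1 : (c0*c0)*2 + 0*1 + 0*(8/9) + 0*(2/3) + 0*(46/75) = 1 := by
    have := ortho_eq 0 0 (c0*c0) 0 0 0 0 (fun x => by rw [ev0 x]; ring)
    simpa using this
  have X2 : (c0*d0)*2 + (c0*d1)*1 + 0*(8/9) + 0*(2/3) + 0*(46/75) = 0 := by
    have := ortho_eq 0 1 (c0*d0) (c0*d1) 0 0 0 (fun x => by rw [ev0 x, ev1 x]; ring)
    simpa using this
  have X3 : (d0*d0)*2 + (d0*d1 + d1*d0)*1 + (d1*d1)*(8/9) + 0*(2/3) + 0*(46/75) = 1 := by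
    have := ortho_eq 1 1 (d0*d0) (d0*d1 + d1*d0) (d1*d1) 0 0 (fun x => by rw [ev1 x]; ring)
    simpa using this
  have X4 : (d0*e0)*2 + (d0*e1 + d1*e0)*1 + (d0*e2 + d1*e1)*(8/9) + (d1*e2)*(2/3) + 0*(46/75) = 0 := by
    have := ortho_eq 1 2 (d0*e0) (d0*e1 + d1*e0) (d0*e2 + d1*e1) (d1*e2) 0
      (fun x => by rw [ev1 x, ev2 x]; ring)
    simpa using this
  have X5 : (e0*e0)*2 + (e0*e1 + e1*e0)*1 + (e0*e2 + e1*e1 + e2*e0)*(8/9)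
      + (e1*e2 + e2*e1)*(2/3) + (e2*e2)*(46/75) = 1 := by
    have := ortho_eq 2 2 (e0*e0) (e0*e1 + e1*e0) (e0*e2 + e1*e1 + e2*e0) (e1*e2 + e2*e1) (e2*e2)
      (fun x => by rw [ev2 x]; ring)
    simpa using this
  -- algebra
  have s1 : c0^2 = 1/2 := by linear_combination (1/2 : ℝ) * X1
  have hc0 : c0 ≠ 0 := by
    intro h; rw [h] at s1; norm_num at s1
  have X2' : c0 * (2*d0 + d1) = 0 := by linear_combination X2
  have s2 : d1 = -2*d0 := by
    rcases mul_eq_zero.mp X2' with h | h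
    · exact absurd h hc0
    · linarith
  rw [s2] at X3 R1
  have s3 : d0^2 = 9/14 := by linear_combination (9/14 : ℝ) * X3
  have h2' : c0^2 = 4*(b 0^2)*d0^2 := by rw [R1]; ring
  have hb0 : b 0 ^ 2 = 7/36 := by
    linear_combination (7/18 : ℝ)*s1 - (7/18 : ℝ)*h2' - (14/9 : ℝ)*(b 0^2)*s3
  have hc' : c0 + 2*(b 0 * d0) = 0 := by linear_combination R1
  have ha0 : a 0 = 1/2 := by
    linear_combination (-2*(a 0))*s1 + 2*c0*f1 - 2*(b 0*d0)*hc' + 4*(b 0^2)*s3 + (18/7 : ℝ)*hb0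
  have hbc : b 0 * c0 = -(7/18)*d0 := by
    linear_combination (b 0)*R1 - 2*d0*hb0
  have Y : 2*(d0*(b 1*e0)) + (d0*(b 1*e1) + d1*(b 1*e0))
      + (8/9)*(d0*(b 1*e2) + d1*(b 1*e1)) + (2/3)*(d1*(b 1*e2)) = 0 := by
    linear_combination (b 1)*X4
  rw [q0', q1, q2, s2, hbc] at Y
  have Y2 : (1 - 14*(a 1))*d0^2 = 0 := by linear_combination 9*Y
  have hd0 : d0^2 ≠ 0 := by rw [s3]; norm_num
  have ha1 : a 1 = 1/14 := by
    rcases mul_eq_zero.mp Y2 with h | h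
    · linarith
    · exact absurd h hd0
  have Z : 2*(b 1*e0)^2 + 2*((b 1*e0)*(b 1*e1)) + (8/9)*((b 1*e1)^2 + 2*((b 1*e0)*(b 1*e2)))
      + (4/3)*((b 1*e1)*(b 1*e2)) + (46/75)*(b 1*e2)^2 = (b 1)^2 := by
    linear_combination ((b 1)^2)*X5
  rw [q0', q1, q2, s2, hbc, ha1] at Z
  have hb1 : (b 1)^2 = 2588/11025 := by
    linear_combination (-1 : ℝ)*Z + (36232/99225 : ℝ)*s3
  exact ⟨ha0, ha1, hb0, hb1⟩
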